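/- Let T ⊆ ℤ² be the set defined by (i,j) ∈ T if and only if i ≥ 0, j ≥ 0, and there exists an integer n > 0 with i = n·2^{j+1}. Then for every n ≥ 1, R_T(n) ≥ n². -/

import Mathlib

open Classical

noncomputable section

/-- Sup norm of an integer vector. -/
def supNorm {ι : Type} [Fintype ι] (x : ι → ℤ) : ℕ :=
  Finset.univ.sup fun i => (x i).natAbs

/-- The block of size `n` of `M` at `x`. -/
def blockOf {ι : Type} [Fintype ι] (M : Set (ι → ℤ)) (x : ι → ℤ) (n : ℕ) :
    (ι → Fin n) → Prop :=
  fun w => (fun i => x i + (w i : ℤ)) ∈ M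

/-- A block is recurrent if it occurs at points of arbitrarily large norm. -/
def IsRecurrentBlock {ι : Type} [Fintype ι] (M : Set (ι → ℤ)) (n : ℕ)
    (B : (ι → Fin n) → Prop) : Prop :=
  ∀ L : ℕ, ∃ x : ι → ℤ, L ≤ supNorm x ∧ blockOf M x n = B

/-- `R_M(n)`: number of distinct recurrent blocks of size `n`. -/
def recBlockCount {ι : Type} [Fintype ι] (M : Set (ι → ℤ)) (n : ℕ) : ℕ :=
  Set.ncard {B : (ι → Fin n) → Prop | IsRecurrentBlock M n B}

/-- `p_M(n)`: number of distinct blocks of size `n`. -/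
def blockCount {ι : Type} [Fintype ι] (M : Set (ι → ℤ)) (n : ℕ) : ℕ :=
  Set.ncard {B : (ι → Fin n) → Prop | ∃ x, blockOf M x n = B}

/-- Linear subset of `ℤ^ι`. -/
def IsLinearSetZ {ι : Type} [Fintype ι] (S : Set (ι → ℤ)) : Prop :=
  ∃ (x : ι → ℤ) (V : Finset (ι → ℤ)),
    S = {y | ∃ c : (ι → ℤ) → ℕ, y = x + ∑ v ∈ V, (c v : ℤ) • v}

/-- Semilinear = finite union of linear sets. -/
def IsSemilinearSetZ {ι : Type} [Fintype ι] (S : Set (ι → ℤ)) : Prop :=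
  ∃ F : Finset (Set (ι → ℤ)), (∀ T ∈ F, IsLinearSetZ T) ∧ S = ⋃ T ∈ F, T

/-- Section `M_{i,c}` of a subset of `ℤ^(d+1)`. -/
def sectionSet {d : ℕ} (M : Set (Fin (d + 1) → ℤ)) (i : Fin (d + 1)) (c : ℤ) :
    Set (Fin d → ℤ) :=
  {y | i.insertNth c y ∈ M}

/-- Open ball (for the sup norm) of radius `K` centered at `x`. -/
def ball {ι : Type} [Fintype ι] (x : ι → ℤ) (K : ℕ) : Set (ι → ℤ) :=
  {y | supNorm (x - y) < K}

/-- `M` is `v`-periodic inside `X`. -/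
def vPeriodicInside {ι : Type} [Fintype ι] (M : Set (ι → ℤ)) (v : ι → ℤ)
    (X : Set (ι → ℤ)) : Prop :=
  ∀ m : ι → ℤ, m ∈ X → m + v ∈ X → (m ∈ M ↔ m + v ∈ M)

/-- Border of `A` in direction `v`. -/
def border {ι : Type} (A : Set (ι → ℤ)) (v : ι → ℤ) : Set (ι → ℤ) :=
  {x | x ∈ A ∧ x + v ∉ A}

/-- `(d-k)`-dimensional section of `M ⊆ ℤ^d` obtained by fixing the coordinates
in the range of `g` to the corresponding constants `c`. -/
def multiSection {d k : ℕ} (M : Set (Fin d → ℤ)) (g : Fin k → Fin d)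
    (c : Fin k → ℤ) : Set ({j : Fin d // ∀ m, g m ≠ j} → ℤ) :=
  {y | (fun j : Fin d =>
    if h : ∃ m, g m = j then c (Classical.choose h)
    else y ⟨j, fun m hm => h ⟨m, hm⟩⟩) ∈ M}

/-- Repetitivity of a subset of `ℤ^ι`. -/
def Repetitive {ι : Type} [Fintype ι] (M : Set (ι → ℤ)) : Prop :=
  ∀ n : ℕ, 1 ≤ n → ∃ R : ℕ, ∀ x y : ι → ℤ, ∃ z : ι → ℤ,
    supNorm (z - y) ≤ R ∧ blockOf M z n = blockOf M x n

/-- Ideal crystal: `d` linearly independent translation periods. -/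
def IsIdealCrystal {d : ℕ} (M : Set (Fin d → ℤ)) : Prop :=
  ∃ p : Fin d → (Fin d → ℤ), LinearIndependent ℤ p ∧
    ∀ i, (fun x => x + p i) '' M = M

/-- The Toeplitz-like set: `(i,j) ∈ T` iff `i,j ≥ 0` and `i = n·2^(j+1)` for
some integer `n > 0`. -/
def toeplitzSet : Set (Fin 2 → ℤ) :=
  {x | 0 ≤ x 0 ∧ 0 ≤ x 1 ∧ ∃ n : ℤ, 0 < n ∧ x 0 = n * 2 ^ ((x 1).toNat + 1)}

/-! At `x = (2^(n+h+1) m - c, n)` with `m` odd, the block of `T` of size `n` is the column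
`{w | w₀ = c, w₁ ≤ h}`: a point `x + w` needs `2^(n+1+w₁) ∣ 2^(n+h+1) m + (w₀ - c)`, and since
`|w₀ - c| < 2^(n+1)` this forces `w₀ = c`, after which the oddness of `m` caps the exponent at
`n+h+1`. Letting `m` grow makes each of these `n²` blocks recurrent. -/

lemma mem_toeplitzSet_iff (x : Fin 2 → ℤ) :
    x ∈ toeplitzSet ↔ 0 < x 0 ∧ 0 ≤ x 1 ∧ (2 : ℤ) ^ ((x 1).toNat + 1) ∣ x 0 := by
  have hpow : (0 : ℤ) < 2 ^ ((x 1).toNat + 1) := by positivity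
  constructor
  · rintro ⟨-, h1, q, hq, hx⟩
    exact ⟨hx ▸ mul_pos hq hpow, h1, q, by rw [hx, mul_comm]⟩
  · rintro ⟨h0, h1, q, hx⟩
    refine ⟨h0.le, h1, q, pos_of_mul_pos_right (hx ▸ h0) hpow.le, by rw [hx, mul_comm]⟩

lemma natAbs_le_supNorm {ι : Type} [Fintype ι] (x : ι → ℤ) (i : ι) :
    (x i).natAbs ≤ supNorm x :=
  Finset.le_sup (f := fun i => (x i).natAbs) (Finset.mem_univ i)

lemma card_le_recBlockCount {ι α : Type} [Fintype ι] [Fintype α] {M : Set (ι → ℤ)} {n : ℕ}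
    {f : α → (ι → Fin n) → Prop} (hf : Function.Injective f)
    (hrec : ∀ a, IsRecurrentBlock M n (f a)) :
    Fintype.card α ≤ recBlockCount M n := by
  rw [← Nat.card_eq_fintype_card, ← Set.ncard_univ, ← Set.ncard_image_of_injective _ hf]
  exact Set.ncard_le_ncard (by rintro _ ⟨a, -, rfl⟩; exact hrec a) (Set.toFinite _)

lemma Int.two_pow_dvd_two_pow_mul_odd_iff {m : ℤ} (hm : Odd m) {j k : ℕ} :
    (2 : ℤ) ^ j ∣ 2 ^ k * m ↔ j ≤ k := by
  refine ⟨fun hdvd => ?_, fun hjk => (pow_dvd_pow 2 hjk).mul_right m⟩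
  by_contra! hkj
  have h2k : (2 : ℤ) ^ k * 2 ∣ 2 ^ k * m := (pow_succ (2 : ℤ) k ▸ pow_dvd_pow 2 hkj).trans hdvd
  exact Int.not_even_iff_odd.mpr hm
    (even_iff_two_dvd.mpr ((mul_dvd_mul_iff_left (by positivity)).mp h2k))

lemma Int.two_pow_dvd_two_pow_mul_odd_add_iff {m d : ℤ} (hm : Odd m) {i j k : ℕ}
    (hik : i ≤ k) (hd : |d| < 2 ^ i) :
    (2 : ℤ) ^ (i + j) ∣ 2 ^ k * m + d ↔ d = 0 ∧ i + j ≤ k := by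
  refine ⟨fun hdvd => ?_, fun ⟨hd0, hijk⟩ => ?_⟩
  · have hdi : (2 : ℤ) ^ i ∣ d := by
      have := (pow_dvd_pow 2 (Nat.le_add_right i j)).trans hdvd
      simpa using dvd_sub this ((pow_dvd_pow 2 hik).mul_right m)
    obtain rfl : d = 0 := Int.eq_zero_of_abs_lt_dvd hdi hd
    exact ⟨rfl, (two_pow_dvd_two_pow_mul_odd_iff hm).mp (by simpa using hdvd)⟩
  · simpa [hd0] using (two_pow_dvd_two_pow_mul_odd_iff hm).mpr hijk

def toeplitzBlock (n : ℕ) (c h : Fin n) : (Fin 2 → Fin n) → Prop :=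
  fun w => w 0 = c ∧ w 1 ≤ h

lemma toeplitzBlock_injective (n : ℕ) :
    Function.Injective fun p : Fin n × Fin n => toeplitzBlock n p.1 p.2 := by
  rintro ⟨c, h⟩ ⟨c', h'⟩ heq
  have hle : c = c' ∧ h ≤ h' := by simpa [toeplitzBlock] using congrFun heq ![c, h]
  have hge : c' = c ∧ h' ≤ h := by simpa [toeplitzBlock] using (congrFun heq ![c', h']).symm
  exact Prod.ext hle.1 (le_antisymm hle.2 hge.2)

lemma blockOf_toeplitzSet {n : ℕ} (c h : Fin n) {m : ℤ} (hm : Odd m) (hm0 : 0 < m) :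
    blockOf toeplitzSet ![2 ^ (n + h + 1) * m - c, n] n = toeplitzBlock n c h := by
  funext w
  have hw : ((w 0 : ℕ) : ℤ) < n := by exact_mod_cast (w 0).isLt
  have hc : ((c : ℕ) : ℤ) < n := by exact_mod_cast c.isLt
  have hn : (n : ℤ) < 2 ^ (n + 1) := by
    exact_mod_cast (Nat.lt_succ_self n).trans Nat.lt_two_pow_self
  have hd : |((w 0 : ℕ) : ℤ) - c| < 2 ^ (n + 1) := by
    rw [abs_lt]
    constructor <;> linarith [Int.natCast_nonneg (w 0 : ℕ), Int.natCast_nonneg (c : ℕ)]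
  have hdvd :=
    Int.two_pow_dvd_two_pow_mul_odd_add_iff (j := w 1) (k := n + h + 1) hm (by omega) hd
  have hexp : ((n : ℤ) + ((w 1 : ℕ) : ℤ)).toNat + 1 = n + 1 + w 1 := by omega
  have hsum : 2 ^ (n + h + 1) * m - c + ((w 0 : ℕ) : ℤ) = 2 ^ (n + h + 1) * m + (w 0 - c) := by
    ring
  simp only [blockOf, toeplitzBlock, eq_iff_iff, mem_toeplitzSet_iff, Matrix.cons_val_zero,
    Matrix.cons_val_one, hexp, hsum]
  rw [hdvd, sub_eq_zero, Nat.cast_inj, Fin.val_inj, Fin.le_iff_val_le_val]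
  constructor
  · rintro ⟨-, -, hwc, hle⟩
    exact ⟨hwc, by omega⟩
  · rintro ⟨rfl, hle⟩
    exact ⟨by simpa using mul_pos (pow_pos two_pos (n + h + 1)) hm0, by positivity, rfl, by omega⟩

lemma isRecurrentBlock_toeplitzBlock {n : ℕ} (c h : Fin n) :
    IsRecurrentBlock toeplitzSet n (toeplitzBlock n c h) := by
  intro L
  set m : ℤ := 2 * (L + n) + 1
  refine ⟨![2 ^ (n + h + 1) * m - c, n], ?_,
    blockOf_toeplitzSet c h ⟨L + n, rfl⟩ (by positivity)⟩
  have hm : m ≤ 2 ^ (n + h + 1) * m :=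
    le_mul_of_one_le_left (by positivity) (one_le_pow₀ (by norm_num))
  have hc : ((c : ℕ) : ℤ) < n := by exact_mod_cast c.isLt
  refine le_trans ?_ (natAbs_le_supNorm _ 0)
  simp only [Matrix.cons_val_zero]
  omega

/-- For the Toeplitz-like set, `R_T(n) ≥ n²` for every `n ≥ 1`. -/
theorem toeplitz_recBlockCount_ge : ∀ n : ℕ, 1 ≤ n →
    n ^ 2 ≤ recBlockCount toeplitzSet n := by
  intro n _
  calc n ^ 2 = Fintype.card (Fin n × Fin n) := by simp [sq]
    _ ≤ recBlockCount toeplitzSet n :=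
      card_le_recBlockCount (toeplitzBlock_injective n)
        fun p => isRecurrentBlock_toeplitzBlock p.1 p.2
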